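/- Let λ > 0. For all x, y > 0, lim_{t→∞} t · S(q_A(tx), q_B(ty)) = λ^{−1/λ} ∫₀¹ min{ τ(v)^{−1/λ}/(μ₁ x), τ(1−v)^{−1/λ}/(μ₂ y) } dF_V(v). -/

import Mathlib

open MeasureTheory Filter Set

noncomputable section

/-- A positive function defined near `+∞` is slowly varying at infinity if
`L(at)/L(t) → 1` as `t → ∞` for every `a > 0`. -/
def SlowlyVarying (L : ℝ → ℝ) : Prop :=
  (∀ᶠ t in atTop, 0 < L t) ∧
    ∀ a : ℝ, 0 < a → Tendsto (fun t => L (a * t) / L t) atTop (nhds 1)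

/-- `N` is a norm on `ℝ²`, viewed as a two-argument function. -/
def IsNorm2 (N : ℝ → ℝ → ℝ) : Prop :=
  (∀ x y, 0 ≤ N x y) ∧ (∀ x y, N x y = 0 ↔ x = 0 ∧ y = 0) ∧
    (∀ c x y, N (c * x) (c * y) = |c| * N x y) ∧
    (∀ x₁ y₁ x₂ y₂, N (x₁ + x₂) (y₁ + y₂) ≤ N x₁ y₁ + N x₂ y₂)

/-- Condition (C1): symmetry of the norm. -/
def CondC1 (N : ℝ → ℝ → ℝ) : Prop := ∀ x y, N x y = N y x

/-- Condition (C2): the norm dominates the sup-norm. -/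
def CondC2 (N : ℝ → ℝ → ℝ) : Prop := ∀ x y : ℝ, max |x| |y| ≤ N x y

/-- Condition (C3): equality with the sup-norm off the diagonal. -/
def CondC3 (N : ℝ → ℝ → ℝ) : Prop :=
  ∃ x₀ y₀ : ℝ, 0 ≤ x₀ ∧ 0 ≤ y₀ ∧ x₀ ≠ y₀ ∧ N x₀ y₀ = max x₀ y₀

/-- τ(v) = ‖(v, 1−v)‖_m / v.  (At `v = 0` this real-valued version takes the
junk value `0` instead of `+∞`; this is irrelevant for all integrals below,
which are taken against an atomless measure.) -/
def tau (N : ℝ → ℝ → ℝ) (v : ℝ) : ℝ := N v (1 - v) / v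

/-- The probability measure associated with a distribution function `F_V` on
`[0,1]` that is continuous (no atoms) and strictly increasing (positive mass on
every nonempty open subinterval of `[0,1]`): Assumption 1. -/
def GoodMeasure (μ : Measure ℝ) : Prop :=
  μ ((Set.Icc (0:ℝ) 1)ᶜ) = 0 ∧ (∀ x : ℝ, μ {x} = 0) ∧
    ∀ a b : ℝ, 0 ≤ a → a < b → b ≤ 1 → 0 < μ (Set.Ioo a b)

/-- The GP(1,λ) survivor function `(1 + λx)₊^{−1/λ}`, interpreted as `e^{−x}`
when `λ = 0`. -/
def gpTail (l x : ℝ) : ℝ :=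
  if l = 0 then Real.exp (-x) else (max (1 + l * x) 0) ^ (-1 / l)

/-- Marginal survival function `S_A(x) = ∫₀¹ (1 + λ x τ(v))₊^{−1/λ} dF_V(v)`. -/
def survA (N : ℝ → ℝ → ℝ) (μ : Measure ℝ) (l x : ℝ) : ℝ :=
  ∫ v, gpTail l (x * tau N v) ∂μ

/-- Marginal survival function `S_B(y) = ∫₀¹ (1 + λ y τ(1−v))₊^{−1/λ} dF_V(v)`. -/
def survB (N : ℝ → ℝ → ℝ) (μ : Measure ℝ) (l y : ℝ) : ℝ :=
  ∫ v, gpTail l (y * tau N (1 - v)) ∂μ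

/-- Joint survival function
`S(x,y) = ∫₀¹ (1 + λ max{x τ(v), y τ(1−v)})₊^{−1/λ} dF_V(v)`. -/
def survJ (N : ℝ → ℝ → ℝ) (μ : Measure ℝ) (l x y : ℝ) : ℝ :=
  ∫ v, gpTail l (max (x * tau N v) (y * tau N (1 - v))) ∂μ

/-- `μ₁ = λ^{−1/λ} ∫₀¹ τ(v)^{−1/λ} dF_V(v)` (for `λ > 0`). -/
def mu1 (N : ℝ → ℝ → ℝ) (μ : Measure ℝ) (l : ℝ) : ℝ :=
  l ^ (-1 / l) * ∫ v, tau N v ^ (-1 / l) ∂μ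

/-- `μ₂ = λ^{−1/λ} ∫₀¹ τ(1−v)^{−1/λ} dF_V(v)` (for `λ > 0`). -/
def mu2 (N : ℝ → ℝ → ℝ) (μ : Measure ℝ) (l : ℝ) : ℝ :=
  l ^ (-1 / l) * ∫ v, tau N (1 - v) ^ (-1 / l) ∂μ

/-- `χ_λ = λ^{−1/λ} ∫₀¹ min{τ(v)^{−1/λ}/μ₁, τ(1−v)^{−1/λ}/μ₂} dF_V(v)`. -/
def chiLam (N : ℝ → ℝ → ℝ) (μ : Measure ℝ) (l : ℝ) : ℝ :=
  l ^ (-1 / l) *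
    ∫ v, min (tau N v ^ (-1 / l) / mu1 N μ l)
             (tau N (1 - v) ^ (-1 / l) / mu2 N μ l) ∂μ

/-!
Both survival functions are mixtures over `v` of generalized Pareto tails, and for `t > 0`
`t * gpTail l z = (t ^ (-l) + l * (z / t ^ l)) ^ (-1 / l)`. So if `a t / t ^ l → A > 0` and
`g₁ ≥ 1`, the integrand of `t * ∫ gpTail l (max (a t * g₁ v) (b t * g₂ v)) dμ` is bounded by
`(l * A / 2) ^ (-1 / l)` and converges pointwise, and dominated convergence gives the limit
`∫ (l * max (A * g₁ v) (B * g₂ v)) ^ (-1 / l) dμ`. Condition (C2) gives `τ ≥ 1` on `(0, 1)`,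
which carries `μ`. Taking `a = b = t ^ l` and a single marginal, `q_A(t)^(1/l) / t → μ₁`
because `q_A(t) → ∞`; hence `q_A(t x) / t ^ l → (μ₁ x) ^ l`, likewise for `q_B`, and the joint
limit `∫ (l * max ((μ₁ x) ^ l τ(v), (μ₂ y) ^ l τ(1 - v))) ^ (-1 / l) dμ` is the stated integral.
-/

open Real Topology

section GpTail

variable {l : ℝ}

lemma neg_one_div_nonpos (hl : 0 < l) : -1 / l ≤ 0 :=
  div_nonpos_of_nonpos_of_nonneg (by norm_num) hl.le

lemma gpTail_of_nonneg (hl : 0 < l) {z : ℝ} (hz : 0 ≤ z) :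
    gpTail l z = (1 + l * z) ^ (-1 / l) := by
  rw [gpTail, if_neg hl.ne', max_eq_left (by positivity)]

lemma measurable_gpTail (l : ℝ) : Measurable (gpTail l) := by
  unfold gpTail
  by_cases hl : l = 0 <;> simp only [hl, if_true, if_false] <;> fun_prop

lemma gpTail_pos (hl : 0 < l) {z : ℝ} (hz : 0 ≤ z) : 0 < gpTail l z := by
  rw [gpTail_of_nonneg hl hz]
  positivity

lemma gpTail_le_one (hl : 0 < l) {z : ℝ} (hz : 0 ≤ z) : gpTail l z ≤ 1 := by
  rw [gpTail_of_nonneg hl hz]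
  exact rpow_le_one_of_one_le_of_nonpos (by nlinarith) (neg_one_div_nonpos hl)

lemma gpTail_le_gpTail (hl : 0 < l) {z₁ z₂ : ℝ} (hz₁ : 0 ≤ z₁) (h : z₁ ≤ z₂) :
    gpTail l z₂ ≤ gpTail l z₁ := by
  rw [gpTail_of_nonneg hl hz₁, gpTail_of_nonneg hl (hz₁.trans h)]
  exact rpow_le_rpow_of_nonpos (by positivity) (by gcongr) (neg_one_div_nonpos hl)

lemma mul_gpTail_eq (hl : 0 < l) {t z : ℝ} (ht : 0 < t) (hz : 0 ≤ z) :
    t * gpTail l z = (t ^ (-l) + l * (z / t ^ l)) ^ (-1 / l) := by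
  have ht' : t = (t ^ (-l)) ^ (-1 / l) := by
    rw [← rpow_mul ht.le, show -l * (-1 / l) = 1 by field_simp, rpow_one]
  rw [gpTail_of_nonneg hl hz]
  conv_lhs => rw [ht']
  rw [← mul_rpow (by positivity) (by positivity), rpow_neg ht.le]
  congr 1
  field_simp

lemma mul_max_rpow_neg_one_div (hl : 0 < l) {p q a b : ℝ} (hp : 0 < p) (hq : 0 < q)
    (ha : 0 < a) (hb : 0 < b) :
    (l * max (p ^ l * a) (q ^ l * b)) ^ (-1 / l)
      = l ^ (-1 / l) * min (a ^ (-1 / l) / p) (b ^ (-1 / l) / q) := by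
  have hpow : ∀ {r c : ℝ}, 0 < r → 0 < c → (r ^ l * c) ^ (-1 / l) = c ^ (-1 / l) / r := by
    intro r c hr hc
    rw [mul_rpow (by positivity) hc.le, ← rpow_mul hr.le, show l * (-1 / l) = -1 by field_simp,
      rpow_neg_one, inv_mul_eq_div]
  rw [mul_rpow hl.le (by positivity),
    (antitoneOn_rpow_Ioi_of_exponent_nonpos (neg_one_div_nonpos hl)).map_max
      (mem_Ioi.2 (by positivity)) (mem_Ioi.2 (by positivity)),
    hpow hp ha, hpow hq hb]

end GpTail

lemma integral_pos_of_ae_pos {α : Type*} [MeasurableSpace α] {μ : Measure α} [NeZero μ]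
    {f : α → ℝ} (hf : Integrable f μ) (hpos : ∀ᵐ v ∂μ, 0 < f v) : 0 < ∫ v, f v ∂μ := by
  have hnn : 0 ≤ᵐ[μ] f := hpos.mono fun _ hv => hv.le
  refine (integral_nonneg_of_ae hnn).lt_of_ne' fun h0 => ?_
  obtain ⟨v, hv, hv0⟩ := (hpos.and ((integral_eq_zero_iff_of_nonneg_ae hnn hf).1 h0)).exists
  exact hv.ne' hv0

section GpMixture

variable {α : Type*} [MeasurableSpace α] {μ : Measure α} [IsProbabilityMeasure μ]
  {l : ℝ} {g g₁ g₂ : α → ℝ}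

lemma integrable_gpTail_mul (hl : 0 < l) (hg : Measurable g) (hg1 : ∀ᵐ v ∂μ, 1 ≤ g v)
    {x : ℝ} (hx : 0 ≤ x) : Integrable (fun v => gpTail l (x * g v)) μ := by
  refine .of_bound ((measurable_gpTail l).comp (hg.const_mul x)).aestronglyMeasurable 1 ?_
  filter_upwards [hg1] with v hv
  have hxg : 0 ≤ x * g v := mul_nonneg hx (by linarith)
  rw [norm_of_nonneg (gpTail_pos hl hxg).le]
  exact gpTail_le_one hl hxg

lemma integral_gpTail_mul_pos (hl : 0 < l) (hg : Measurable g) (hg1 : ∀ᵐ v ∂μ, 1 ≤ g v)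
    {x : ℝ} (hx : 0 ≤ x) : 0 < ∫ v, gpTail l (x * g v) ∂μ :=
  integral_pos_of_ae_pos (integrable_gpTail_mul hl hg hg1 hx)
    (hg1.mono fun _ hv => gpTail_pos hl (mul_nonneg hx (by linarith)))

lemma integral_gpTail_mul_le (hl : 0 < l) (hg : Measurable g) (hg1 : ∀ᵐ v ∂μ, 1 ≤ g v)
    {x₁ x₂ : ℝ} (hx₁ : 0 ≤ x₁) (h : x₁ ≤ x₂) :
    ∫ v, gpTail l (x₂ * g v) ∂μ ≤ ∫ v, gpTail l (x₁ * g v) ∂μ :=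
  integral_mono_ae (integrable_gpTail_mul hl hg hg1 (hx₁.trans h))
    (integrable_gpTail_mul hl hg hg1 hx₁) (hg1.mono fun _ hv =>
      gpTail_le_gpTail hl (mul_nonneg hx₁ (by linarith))
        (mul_le_mul_of_nonneg_right h (by linarith)))

lemma integral_rpow_neg_one_div_pos (hl : 0 < l) (hg : Measurable g)
    (hg1 : ∀ᵐ v ∂μ, 1 ≤ g v) : 0 < ∫ v, g v ^ (-1 / l) ∂μ := by
  refine integral_pos_of_ae_pos (.of_bound (hg.pow_const _).aestronglyMeasurable 1 ?_)
    (hg1.mono fun _ hv => rpow_pos_of_pos (by linarith) _)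
  filter_upwards [hg1] with v hv
  rw [norm_of_nonneg (rpow_nonneg (by linarith) _)]
  exact rpow_le_one_of_one_le_of_nonpos hv (neg_one_div_nonpos hl)

theorem tendsto_mul_integral_gpTail_max (hl : 0 < l) (hg₁ : Measurable g₁)
    (hg₂ : Measurable g₂) (hg₁1 : ∀ᵐ v ∂μ, 1 ≤ g₁ v)
    {a b : ℝ → ℝ} {A B : ℝ} (hA : 0 < A)
    (ha : Tendsto (fun t => a t / t ^ l) atTop (𝓝 A))
    (hb : Tendsto (fun t => b t / t ^ l) atTop (𝓝 B)) :
    Tendsto (fun t => t * ∫ v, gpTail l (max (a t * g₁ v) (b t * g₂ v)) ∂μ) atTop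
      (𝓝 (∫ v, (l * max (A * g₁ v) (B * g₂ v)) ^ (-1 / l) ∂μ)) := by
  have hev : ∀ᶠ t in atTop, 0 < t ∧ A / 2 < a t / t ^ l :=
    (eventually_gt_atTop 0).and (ha.eventually (lt_mem_nhds (half_lt_self hA)))
  have hlim : Tendsto (fun t => ∫ v,
      (t ^ (-l) + l * max (a t / t ^ l * g₁ v) (b t / t ^ l * g₂ v)) ^ (-1 / l) ∂μ) atTop
      (𝓝 (∫ v, (l * max (A * g₁ v) (B * g₂ v)) ^ (-1 / l) ∂μ)) := by
    refine tendsto_integral_filter_of_dominated_convergence (fun _ => (l * (A / 2)) ^ (-1 / l))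
      (.of_forall fun t => Measurable.aestronglyMeasurable (by fun_prop)) ?_ (integrable_const _) ?_
    · filter_upwards [hev] with t ⟨ht, hat⟩
      filter_upwards [hg₁1] with v hv
      have hlow : l * (A / 2) ≤ t ^ (-l) + l * max (a t / t ^ l * g₁ v) (b t / t ^ l * g₂ v) := by
        have : A / 2 ≤ a t / t ^ l * g₁ v := by nlinarith
        have : 0 ≤ t ^ (-l) := by positivity
        nlinarith [le_max_left (a t / t ^ l * g₁ v) (b t / t ^ l * g₂ v)]
      have hA2 : 0 < l * (A / 2) := by positivity
      rw [norm_of_nonneg (rpow_nonneg (hA2.le.trans hlow) _)]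
      exact rpow_le_rpow_of_nonpos hA2 hlow (neg_one_div_nonpos hl)
    · filter_upwards [hg₁1] with v hv
      have hpos : 0 < l * max (A * g₁ v) (B * g₂ v) :=
        mul_pos hl ((mul_pos hA (by linarith)).trans_le (le_max_left _ _))
      have hinner := (tendsto_rpow_neg_atTop hl).add
        (((ha.mul_const (g₁ v)).max (hb.mul_const (g₂ v))).const_mul l)
      rw [zero_add] at hinner
      exact (continuousAt_rpow_const _ _ (Or.inl hpos.ne')).tendsto.comp hinner
  refine hlim.congr' ?_
  filter_upwards [hev] with t ⟨ht, hat⟩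
  have hat0 : 0 < a t := (div_pos_iff_of_pos_right (rpow_pos_of_pos ht l)).1 (by linarith)
  rw [← integral_const_mul]
  refine integral_congr_ae ?_
  filter_upwards [hg₁1] with v hv
  rw [mul_gpTail_eq hl ht ((mul_nonneg hat0.le (by linarith)).trans (le_max_left _ _)),
    ← max_div_div_right (rpow_pos_of_pos ht l).le, mul_div_right_comm, mul_div_right_comm]

lemma tendsto_mul_integral_gpTail_rpow_mul (hl : 0 < l) (hg : Measurable g)
    (hg1 : ∀ᵐ v ∂μ, 1 ≤ g v) :
    Tendsto (fun t => t * ∫ v, gpTail l (t ^ l * g v) ∂μ) atTop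
      (𝓝 (l ^ (-1 / l) * ∫ v, g v ^ (-1 / l) ∂μ)) := by
  have hone : Tendsto (fun t : ℝ => t ^ l / t ^ l) atTop (𝓝 1) :=
    tendsto_const_nhds.congr' (by
      filter_upwards [eventually_gt_atTop 0] with t ht
      exact (div_self (rpow_pos_of_pos ht l).ne').symm)
  have h := tendsto_mul_integral_gpTail_max hl hg hg hg1 one_pos hone hone (μ := μ)
  simp only [max_self, one_mul] at h
  convert h using 2
  rw [← integral_const_mul]
  refine integral_congr_ae ?_
  filter_upwards [hg1] with v hv
  exact (mul_rpow hl.le (by linarith)).symm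

lemma tendsto_atTop_of_integral_gpTail_eq_inv (hl : 0 < l) (hg : Measurable g)
    (hg1 : ∀ᵐ v ∂μ, 1 ≤ g v) {q : ℝ → ℝ}
    (hq : ∀ t : ℝ, 1 ≤ t → 0 ≤ q t ∧ ∫ v, gpTail l (q t * g v) ∂μ = 1 / t) :
    Tendsto q atTop atTop := by
  refine tendsto_atTop.2 fun M => ?_
  have hS := integral_gpTail_mul_pos hl hg hg1 (le_max_right M 0) (μ := μ)
  filter_upwards [eventually_ge_atTop 1, tendsto_inv_atTop_zero.eventually (gt_mem_nhds hS)]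
    with t ht htS
  obtain ⟨hq0, hqt⟩ := hq t ht
  by_contra! hqM
  have := integral_gpTail_mul_le hl hg hg1 hq0 ((le_max_left M 0).trans' hqM.le) (μ := μ)
  rw [hqt, one_div] at this
  linarith

lemma tendsto_rpow_one_div_div_of_integral_gpTail_eq_inv (hl : 0 < l) (hg : Measurable g)
    (hg1 : ∀ᵐ v ∂μ, 1 ≤ g v) {q : ℝ → ℝ}
    (hq : ∀ t : ℝ, 1 ≤ t → 0 ≤ q t ∧ ∫ v, gpTail l (q t * g v) ∂μ = 1 / t) :
    Tendsto (fun t => q t ^ (1 / l) / t) atTop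
      (𝓝 (l ^ (-1 / l) * ∫ v, g v ^ (-1 / l) ∂μ)) := by
  have hq' : Tendsto (fun t => q t ^ (1 / l)) atTop atTop :=
    (tendsto_rpow_atTop (by positivity)).comp (tendsto_atTop_of_integral_gpTail_eq_inv hl hg hg1 hq)
  refine ((tendsto_mul_integral_gpTail_rpow_mul hl hg hg1).comp hq').congr' ?_
  filter_upwards [eventually_ge_atTop 1] with t ht
  obtain ⟨hq0, hqt⟩ := hq t ht
  rw [Function.comp_apply, ← rpow_mul hq0, one_div_mul_cancel hl.ne', rpow_one, hqt, mul_one_div]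

lemma tendsto_div_rpow_of_integral_gpTail_eq_inv (hl : 0 < l) (hg : Measurable g)
    (hg1 : ∀ᵐ v ∂μ, 1 ≤ g v) {q : ℝ → ℝ}
    (hq : ∀ t : ℝ, 1 ≤ t → 0 ≤ q t ∧ ∫ v, gpTail l (q t * g v) ∂μ = 1 / t) {x : ℝ} (hx : 0 < x) :
    Tendsto (fun t => q (t * x) / t ^ l) atTop
      (𝓝 (((l ^ (-1 / l) * ∫ v, g v ^ (-1 / l) ∂μ) * x) ^ l)) := by
  have htx : Tendsto (fun t => t * x) atTop atTop := tendsto_id.atTop_mul_const hx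
  have h := ((tendsto_rpow_one_div_div_of_integral_gpTail_eq_inv hl hg hg1 hq).comp htx).mul_const x
  refine ((continuousAt_rpow_const _ _ (Or.inr hl.le)).tendsto.comp h).congr' ?_
  filter_upwards [eventually_gt_atTop 0, htx.eventually_ge_atTop 1] with t ht htx1
  have hq0 := (hq _ htx1).1
  rw [Function.comp_apply, Function.comp_apply, div_mul_eq_div_div, div_mul_cancel₀ _ hx.ne',
    div_rpow (by positivity) ht.le, ← rpow_mul hq0, one_div_mul_cancel hl.ne', rpow_one]

end GpMixture

namespace IsNorm2

variable {N : ℝ → ℝ → ℝ}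

lemma le_add_abs_sub (hN : IsNorm2 N) (a b a' b' : ℝ) :
    N a b ≤ N a' b' + (|a - a'| * N 1 0 + |b - b'| * N 0 1) := by
  obtain ⟨-, -, hhom, htri⟩ := hN
  have hx : N (a - a') 0 = |a - a'| * N 1 0 := by simpa using hhom (a - a') 1 0
  have hy : N 0 (b - b') = |b - b'| * N 0 1 := by simpa using hhom (b - b') 0 1
  calc N a b = N (a' + (a - a')) (b' + (b - b')) := by ring_nf
    _ ≤ N a' b' + N (a - a') (b - b') := htri _ _ _ _
    _ ≤ N a' b' + (N (a - a') 0 + N 0 (b - b')) := by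
      gcongr; simpa using htri (a - a') 0 0 (b - b')
    _ = _ := by rw [hx, hy]

lemma continuous_uncurry (hN : IsNorm2 N) : Continuous (Function.uncurry N) := by
  have hK : 0 ≤ N 1 0 + N 0 1 := add_nonneg (hN.1 1 0) (hN.1 0 1)
  refine (LipschitzWith.of_dist_le_mul (K := ⟨_, hK⟩) fun p p' => ?_).continuous
  have h := hN.le_add_abs_sub p.1 p.2 p'.1 p'.2
  have h' := hN.le_add_abs_sub p'.1 p'.2 p.1 p.2
  rw [abs_sub_comm p'.1, abs_sub_comm p'.2] at h'
  have h1 : |p.1 - p'.1| ≤ dist p p' := le_max_left _ _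
  have h2 : |p.2 - p'.2| ≤ dist p p' := le_max_right _ _
  rw [Real.dist_eq, abs_sub_le_iff]
  change N p.1 p.2 - N p'.1 p'.2 ≤ (N 1 0 + N 0 1) * dist p p' ∧
    N p'.1 p'.2 - N p.1 p.2 ≤ (N 1 0 + N 0 1) * dist p p'
  constructor <;> nlinarith [hN.1 1 0, hN.1 0 1]

end IsNorm2

lemma measurable_tau {N : ℝ → ℝ → ℝ} (hN : IsNorm2 N) : Measurable (tau N) := by
  have hcurve : Continuous fun v : ℝ => N v (1 - v) :=
    hN.continuous_uncurry.comp (continuous_id.prodMk (continuous_const.sub continuous_id))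
  exact hcurve.measurable.div measurable_id

lemma one_le_tau {N : ℝ → ℝ → ℝ} (hC2 : CondC2 N) {v : ℝ} (hv : 0 < v) : 1 ≤ tau N v := by
  rw [tau, one_le_div hv]
  exact (le_abs_self v).trans ((le_max_left _ _).trans (hC2 v (1 - v)))

lemma GoodMeasure.ae_mem_Ioo {μ : Measure ℝ} (hμ : GoodMeasure μ) :
    ∀ᵐ v ∂μ, v ∈ Ioo (0 : ℝ) 1 := by
  obtain ⟨hIcc, hatom, -⟩ := hμ
  have hne : ∀ x : ℝ, ∀ᵐ v ∂μ, v ≠ x := fun x => measure_eq_zero_iff_ae_notMem.1 (hatom x)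
  filter_upwards [mem_ae_iff.2 hIcc, hne 0, hne 1] with v hv hv0 hv1
  exact ⟨hv.1.lt_of_ne' hv0, hv.2.lt_of_ne hv1⟩

theorem stmt14_general (N : ℝ → ℝ → ℝ) (hN : IsNorm2 N) (hC2 : CondC2 N)
    (μ : Measure ℝ) [IsProbabilityMeasure μ] (hμ : GoodMeasure μ)
    (l : ℝ) (hl : 0 < l) (qA qB : ℝ → ℝ)
    (hqA : ∀ t : ℝ, 1 ≤ t → 0 ≤ qA t ∧ survA N μ l (qA t) = 1 / t)
    (hqB : ∀ t : ℝ, 1 ≤ t → 0 ≤ qB t ∧ survB N μ l (qB t) = 1 / t) :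
    ∀ x y : ℝ, 0 < x → 0 < y →
      Tendsto (fun t : ℝ => t * survJ N μ l (qA (t * x)) (qB (t * y))) atTop
        (nhds (l ^ (-1 / l) *
          ∫ v, min (tau N v ^ (-1 / l) / (mu1 N μ l * x))
                   (tau N (1 - v) ^ (-1 / l) / (mu2 N μ l * y)) ∂μ)) := by
  intro x y hx hy
  have hτ₁ : ∀ᵐ v ∂μ, 1 ≤ tau N v := hμ.ae_mem_Ioo.mono fun _ hv => one_le_tau hC2 hv.1
  have hτ₂ : ∀ᵐ v ∂μ, 1 ≤ tau N (1 - v) :=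
    hμ.ae_mem_Ioo.mono fun _ hv => one_le_tau hC2 (sub_pos.2 hv.2)
  have hm₁ : Measurable (tau N) := measurable_tau hN
  have hm₂ : Measurable fun v => tau N (1 - v) := hm₁.comp (measurable_const.sub measurable_id)
  have hμ₁ : 0 < mu1 N μ l * x :=
    mul_pos (mul_pos (rpow_pos_of_pos hl _) (integral_rpow_neg_one_div_pos hl hm₁ hτ₁)) hx
  have hμ₂ : 0 < mu2 N μ l * y :=
    mul_pos (mul_pos (rpow_pos_of_pos hl _) (integral_rpow_neg_one_div_pos hl hm₂ hτ₂)) hy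
  have hA := tendsto_div_rpow_of_integral_gpTail_eq_inv hl hm₁ hτ₁ hqA hx
  have hB := tendsto_div_rpow_of_integral_gpTail_eq_inv hl hm₂ hτ₂ hqB hy
  convert tendsto_mul_integral_gpTail_max hl hm₁ hm₂ hτ₁ (rpow_pos_of_pos hμ₁ l) hA hB using 2
  · rfl
  · rw [← integral_const_mul]
    refine integral_congr_ae ?_
    filter_upwards [hτ₁, hτ₂] with v hv₁ hv₂
    exact (mul_max_rpow_neg_one_div hl hμ₁ hμ₂ (by linarith) (by linarith)).symm

/-- equation (17) of Appendix B: for `λ > 0` and all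
`x, y > 0`,
`t·S(q_A(tx), q_B(ty)) → λ^{−1/λ} ∫₀¹ min{τ(v)^{−1/λ}/(μ₁x), τ(1−v)^{−1/λ}/(μ₂y)} dF_V(v)`. -/
theorem stmt14 (N : ℝ → ℝ → ℝ) (hN : IsNorm2 N) (hC1 : CondC1 N) (hC2 : CondC2 N)
    (hC3 : CondC3 N) (μ : Measure ℝ) [IsProbabilityMeasure μ] (hμ : GoodMeasure μ)
    (l : ℝ) (hl : 0 < l) (qA qB : ℝ → ℝ)
    (hqA : ∀ t : ℝ, 1 ≤ t → 0 ≤ qA t ∧ survA N μ l (qA t) = 1 / t)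
    (hqB : ∀ t : ℝ, 1 ≤ t → 0 ≤ qB t ∧ survB N μ l (qB t) = 1 / t) :
    ∀ x y : ℝ, 0 < x → 0 < y →
      Tendsto (fun t : ℝ => t * survJ N μ l (qA (t * x)) (qB (t * y))) atTop
        (nhds (l ^ (-1 / l) *
          ∫ v, min (tau N v ^ (-1 / l) / (mu1 N μ l * x))
                   (tau N (1 - v) ^ (-1 / l) / (mu2 N μ l * y)) ∂μ)) :=
  stmt14_general N hN hC2 μ hμ l hl qA qB hqA hqB
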